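/- Let H be a 3-uniform 3-partite hypergraph, I = I(H), and suppose X^a is a monomial with X^a ∈ I^(2) \ I^2. Then H contains three distinct pairwise intersecting hyperedges e, e', e'' each dividing X^a (as monomials) such that |e ∩ e' ∩ e''| ≤ 1. -/

import Mathlib

/-!
For a minimal vertex cover `C`, the ideal `P_C` generated by the variables of `C` is the
annihilator of the class of `∏_{v ∉ C} x_v` modulo `I`, hence an associated prime. So
`X^a ∈ I^(2)` gives `s ∉ P_C` with `s X^a ∈ I²`, and a monomial of `s` free of `C` shows that every
vertex cover has weight `∑_{c ∈ C} a_c ≥ 2`. Applied to the cover `{v | b_v = 0}`, this weight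
bound produces an edge dividing `X^b` for `X^b = X^a` and for `X^b = X^a / x_u`.

Since `X^a ∉ I²`, no two edges `e, f` (possibly equal) have `x_e x_f ∣ X^a`. Hence two edges
dividing `X^a` meet, and some `u ∈ e ∩ f` has `a_u ≤ 1` (take `f = e` if `e` is the only edge
dividing `X^a`).
An edge `g` dividing `X^a / x_u` then avoids `u`, so `g ≠ e, f` and
`e ∩ f ∩ g ⊆ (e ∩ f) \ {u}` has at most one element.
-/

open MvPolynomial

noncomputable def symbolicPower {R : Type*} [CommRing R] (I : Ideal R) (n : ℕ) : Ideal R :=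
  sInf { J : Ideal R | ∃ (p : Ideal R) (hp : p.IsPrime),
    p ∈ associatedPrimes R (R ⧸ I) ∧
    J = Ideal.comap (algebraMap R (Localization (@Ideal.primeCompl R _ p hp)))
        (Ideal.map (algebraMap R (Localization (@Ideal.primeCompl R _ p hp))) (I ^ n)) }

noncomputable def edgeIdeal (k : Type*) {V : Type*} [CommRing k] [DecidableEq V]
    (E : Finset (Finset V)) : Ideal (MvPolynomial V k) :=
  Ideal.span ((fun e : Finset V => ∏ x ∈ e, (X x : MvPolynomial V k)) '' ↑E)

open Finset

section Exponents

variable {k V : Type*}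

noncomputable def sqfreeExp (e : Finset V) : V →₀ ℕ := ∑ x ∈ e, Finsupp.single x 1

lemma prod_X_eq_monomial_sqfreeExp [CommSemiring k] (e : Finset V) :
    ∏ x ∈ e, (X x : MvPolynomial V k) = monomial (sqfreeExp e) 1 := by
  rw [sqfreeExp, monomial_sum_one]
  rfl

lemma prod_X_dvd_monomial_of_sqfreeExp_le [CommSemiring k] {e : Finset V} {a : V →₀ ℕ}
    (h : sqfreeExp e ≤ a) : ∏ x ∈ e, (X x : MvPolynomial V k) ∣ monomial a 1 := by
  rw [prod_X_eq_monomial_sqfreeExp]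
  exact monomial_dvd_monomial.mpr ⟨Or.inr h, dvd_rfl⟩

variable [DecidableEq V]

lemma sqfreeExp_apply (e : Finset V) (u : V) : sqfreeExp e u = if u ∈ e then 1 else 0 := by
  simp [sqfreeExp, Finsupp.finsetSum_apply, Finsupp.single_apply]

lemma sum_sqfreeExp (e C : Finset V) : ∑ c ∈ C, sqfreeExp e c = #(e ∩ C) := by
  simp [sqfreeExp_apply, Finset.inter_comm]

lemma card_inter_le_sum_of_sqfreeExp_le {e : Finset V} {b : V →₀ ℕ} (h : sqfreeExp e ≤ b)
    (C : Finset V) : #(e ∩ C) ≤ ∑ c ∈ C, b c :=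
  sum_sqfreeExp e C ▸ Finset.sum_le_sum fun c _ => h c

end Exponents

section MonomialIdeal

variable {k V : Type*} [CommRing k] [DecidableEq V] {E : Finset (Finset V)}

lemma edgeIdeal_eq_span_monomial :
    edgeIdeal k E = Ideal.span ((fun s => monomial s (1 : k)) '' (sqfreeExp '' E)) := by
  rw [edgeIdeal, Set.image_image]
  exact congrArg _ (Set.image_congr fun e _ => prod_X_eq_monomial_sqfreeExp e)

lemma edgeIdeal_sq_eq_span_monomial :
    edgeIdeal k E ^ 2 = Ideal.span ((fun s => monomial s (1 : k)) ''
      Set.image2 (fun e f => sqfreeExp e + sqfreeExp f) E E) := by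
  rw [pow_two, edgeIdeal_eq_span_monomial, Ideal.span_mul_span', ← Set.image2_mul,
    Set.image_image2, Set.image2_image_left, Set.image2_image_right,
    Set.image2_image_left, Set.image2_image_right]
  simp only [monomial_mul, mul_one]

lemma mem_edgeIdeal_iff {p : MvPolynomial V k} :
    p ∈ edgeIdeal k E ↔ ∀ b ∈ p.support, ∃ e ∈ E, sqfreeExp e ≤ b := by
  simp [edgeIdeal_eq_span_monomial, mem_ideal_span_monomial_image]

lemma mem_edgeIdeal_sq_iff {p : MvPolynomial V k} :
    p ∈ edgeIdeal k E ^ 2 ↔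
      ∀ b ∈ p.support, ∃ e ∈ E, ∃ f ∈ E, sqfreeExp e + sqfreeExp f ≤ b := by
  simp [edgeIdeal_sq_eq_span_monomial, mem_ideal_span_monomial_image]

end MonomialIdeal

section VertexCover

variable {V : Type*} [DecidableEq V]

def IsVertexCover (E : Finset (Finset V)) (C : Finset V) : Prop :=
  ∀ e ∈ E, (e ∩ C).Nonempty

lemma exists_inter_subset_singleton_of_minimal {E : Finset (Finset V)} {C : Finset V}
    (hC : Minimal (IsVertexCover E) C) {c : V} (hc : c ∈ C) : ∃ e ∈ E, e ∩ C ⊆ {c} := by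
  by_contra! h
  refine hC.not_prop_of_lt (Finset.erase_ssubset hc) fun e he => ?_
  obtain ⟨u, hu, huc⟩ := Finset.not_subset.mp (h e he)
  exact ⟨u, by simp_all⟩

end VertexCover

section VariableIdeal

variable {V : Type*}

noncomputable def varIdeal (k : Type*) [CommRing k] (C : Finset V) : Ideal (MvPolynomial V k) :=
  Ideal.span (X '' C)

variable {k : Type*} [CommRing k]

lemma exists_mem_support_of_notMem_varIdeal {C : Finset V} {f : MvPolynomial V k}
    (h : f ∉ varIdeal k C) : ∃ b ∈ f.support, ∀ c ∈ C, b c = 0 := by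
  simpa [varIdeal, mem_ideal_span_X_image] using h

lemma add_mem_support_mul_monomial {f : MvPolynomial V k} {b : V →₀ ℕ} (hb : b ∈ f.support)
    (s : V →₀ ℕ) : b + s ∈ (f * monomial s 1).support := by
  rwa [mem_support_iff, coeff_mul_monomial, mul_one, ← mem_support_iff]

variable [DecidableEq V]

lemma sub_aeval_mem_varIdeal (C : Finset V) (f : MvPolynomial V k) :
    f - aeval (fun v => if v ∈ C then 0 else X v) f ∈ varIdeal k C := by
  induction f using MvPolynomial.induction_on with
  | C a => simp
  | add p q hp hq => simpa [add_sub_add_comm] using add_mem hp hq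
  | mul_X p v hp =>
    by_cases hv : v ∈ C
    · simpa [hv] using
        Ideal.mul_mem_left (varIdeal k C) p (Ideal.subset_span (Set.mem_image_of_mem X hv))
    · simpa [hv, sub_mul] using Ideal.mul_mem_right (X v) _ hp

lemma varIdeal_eq_ker (C : Finset V) :
    varIdeal k C =
      RingHom.ker (aeval fun v => if v ∈ C then 0 else (X v : MvPolynomial V k)) := by
  refine le_antisymm (Ideal.span_le.mpr ?_) fun f hf => ?_
  · rintro _ ⟨c, hc, rfl⟩
    simp_all
  · have hφ : aeval (fun v => if v ∈ C then 0 else (X v : MvPolynomial V k)) f = 0 := hf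
    simpa only [hφ, sub_zero] using sub_aeval_mem_varIdeal C f

lemma varIdeal_isPrime [IsDomain k] (C : Finset V) : (varIdeal k C).IsPrime :=
  varIdeal_eq_ker (k := k) C ▸ RingHom.ker_isPrime _

end VariableIdeal

section AssociatedPrime

variable {k V : Type*} [CommRing k] [Fintype V] [DecidableEq V]
  {E : Finset (Finset V)} {C : Finset V}

lemma X_mul_monomial_compl_mem_edgeIdeal (hC : Minimal (IsVertexCover E) C) {c : V}
    (hc : c ∈ C) : X c * monomial (sqfreeExp (univ \ C)) (1 : k) ∈ edgeIdeal k E := by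
  obtain ⟨e, he, hec⟩ := exists_inter_subset_singleton_of_minimal hC hc
  have hle : sqfreeExp e ≤ Finsupp.single c 1 + sqfreeExp (univ \ C) := by
    intro u
    by_cases hue : u ∈ e
    · by_cases huC : u ∈ C
      · obtain rfl : u = c := by simpa using hec (mem_inter.mpr ⟨hue, huC⟩)
        simp [sqfreeExp_apply, hue]
      · simp [sqfreeExp_apply, hue, huC]
    · simp [sqfreeExp_apply, hue]
  rw [X, monomial_mul, one_mul]
  exact Ideal.mem_of_dvd _ (prod_X_dvd_monomial_of_sqfreeExp_le hle)
    (Ideal.subset_span ⟨e, he, rfl⟩)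

lemma mem_varIdeal_of_mul_monomial_compl_mem_edgeIdeal (hC : IsVertexCover E C)
    {r : MvPolynomial V k} (h : r * monomial (sqfreeExp (univ \ C)) 1 ∈ edgeIdeal k E) :
    r ∈ varIdeal k C := by
  by_contra hr
  obtain ⟨b, hb, hbC⟩ := exists_mem_support_of_notMem_varIdeal hr
  obtain ⟨e, he, hle⟩ := mem_edgeIdeal_iff.mp h _ (add_mem_support_mul_monomial hb _)
  have hzero : ∑ c ∈ C, (b + sqfreeExp (univ \ C)) c = 0 :=
    sum_eq_zero fun c hc => by simp [hbC c hc, sqfreeExp_apply, hc]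
  have := card_inter_le_sum_of_sqfreeExp_le hle C
  have := (hC e he).card_pos
  omega

lemma varIdeal_mem_associatedPrimes [IsDomain k] (hC : Minimal (IsVertexCover E) C) :
    varIdeal k C ∈ associatedPrimes (MvPolynomial V k) (MvPolynomial V k ⧸ edgeIdeal k E) := by
  refine ⟨varIdeal_isPrime C, Ideal.Quotient.mk _ (monomial (sqfreeExp (univ \ C)) 1), ?_⟩
  suffices hcolon : (⊥ : Submodule _ (MvPolynomial V k ⧸ edgeIdeal k E)).colon
      {Ideal.Quotient.mk _ (monomial (sqfreeExp (univ \ C)) 1)} = varIdeal k C by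
    rw [hcolon, (varIdeal_isPrime C).radical]
  have hmem_colon : ∀ r, r ∈ (⊥ : Submodule _ (MvPolynomial V k ⧸ edgeIdeal k E)).colon
      {Ideal.Quotient.mk _ (monomial (sqfreeExp (univ \ C)) 1)} ↔
        r * monomial (sqfreeExp (univ \ C)) 1 ∈ edgeIdeal k E := fun r => by
    rw [Submodule.mem_colon_singleton, Submodule.mem_bot, ← Ideal.Quotient.eq_zero_iff_mem]
    rfl
  refine le_antisymm (fun r hr => ?_) (Ideal.span_le.mpr ?_)
  · exact mem_varIdeal_of_mul_monomial_compl_mem_edgeIdeal hC.prop ((hmem_colon r).mp hr)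
  · rintro _ ⟨c, hc, rfl⟩
    exact (hmem_colon _).mpr (X_mul_monomial_compl_mem_edgeIdeal hC hc)

end AssociatedPrime

lemma exists_mul_mem_of_mem_symbolicPower {R : Type*} [CommRing R] {I p : Ideal R} {n : ℕ}
    [p.IsPrime] (hp : p ∈ associatedPrimes R (R ⧸ I)) {x : R} (hx : x ∈ symbolicPower I n) :
    ∃ s ∉ p, s * x ∈ I ^ n := by
  have := Submodule.mem_sInf.mp hx _ ⟨p, inferInstance, hp, rfl⟩
  rwa [Ideal.mem_comap, ← IsLocalization.mk'_one (M := p.primeCompl),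
    IsLocalization.mk'_mem_map_algebraMap_iff] at this

lemma two_le_sum_of_monomial_mem_symbolicPower_two {k V : Type*} [CommRing k] [IsDomain k]
    [Fintype V] [DecidableEq V] {E : Finset (Finset V)} {a : V →₀ ℕ}
    (ha : monomial a (1 : k) ∈ symbolicPower (edgeIdeal k E) 2) {C : Finset V}
    (hC : IsVertexCover E C) : 2 ≤ ∑ c ∈ C, a c := by
  obtain ⟨D, hDC, hD⟩ := exists_minimal_le_of_wellFoundedLT _ C hC
  have := varIdeal_isPrime (k := k) D
  obtain ⟨s, hs, hsa⟩ := exists_mul_mem_of_mem_symbolicPower (varIdeal_mem_associatedPrimes hD) ha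
  obtain ⟨b, hb, hbD⟩ := exists_mem_support_of_notMem_varIdeal hs
  obtain ⟨e, he, f, hf, hle⟩ := mem_edgeIdeal_sq_iff.mp hsa _ (add_mem_support_mul_monomial hb a)
  have he' := (hD.prop e he).card_pos
  have hf' := (hD.prop f hf).card_pos
  calc 2 ≤ #(e ∩ D) + #(f ∩ D) := by omega
    _ = ∑ c ∈ D, (sqfreeExp e + sqfreeExp f) c := by simp [sum_add_distrib, sum_sqfreeExp]
    _ ≤ ∑ c ∈ D, (b + a) c := sum_le_sum fun c _ => hle c
    _ = ∑ c ∈ D, a c := sum_congr rfl fun c hc => by simp [hbD c hc]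
    _ ≤ ∑ c ∈ C, a c := sum_le_sum_of_subset hDC

section Combinatorics

variable {V : Type*} [DecidableEq V] {E : Finset (Finset V)} {a : V →₀ ℕ}

lemma sqfreeExp_add_le {e f : Finset V} (he : sqfreeExp e ≤ a) (hf : sqfreeExp f ≤ a)
    (h : ∀ u ∈ e ∩ f, 2 ≤ a u) : sqfreeExp e + sqfreeExp f ≤ a := by
  intro u
  have heu := he u
  have hfu := hf u
  simp only [Finsupp.add_apply, sqfreeExp_apply] at heu hfu ⊢
  split_ifs at heu hfu ⊢ with hue huf
  · exact h u (mem_inter.mpr ⟨hue, huf⟩)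
  all_goals omega

lemma inter_nonempty_of_not_sqfreeExp_add_le {e f : Finset V} (he : sqfreeExp e ≤ a)
    (hf : sqfreeExp f ≤ a) (h : ¬ sqfreeExp e + sqfreeExp f ≤ a) : (e ∩ f).Nonempty := by
  by_contra hef
  exact h (sqfreeExp_add_le he hf fun u hu => absurd ⟨u, hu⟩ hef)

lemma card_inter_inter_add_two_le {e f g : Finset V} (hcard : #e = #f) (hef : e ≠ f) {u : V}
    (hu : u ∈ e ∩ f) (hug : u ∉ g) : #(e ∩ f ∩ g) + 2 ≤ #e := by
  have hlt : #(e ∩ f) < #e := by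
    refine card_lt_card (ssubset_of_subset_of_ne inter_subset_left fun h => hef ?_)
    exact eq_of_subset_of_card_le (inter_eq_left.mp h) hcard.ge
  have hsub : e ∩ f ∩ g ⊆ (e ∩ f).erase u :=
    fun v hv => mem_erase.mpr ⟨fun hvu => hug (hvu ▸ (mem_inter.mp hv).2), (mem_inter.mp hv).1⟩
  have := card_le_card hsub
  rw [card_erase_of_mem hu] at this
  have := card_pos.mpr ⟨u, hu⟩
  omega

variable [Fintype V]

lemma exists_sqfreeExp_le_of_sum_tsub_le_one
    (hw : ∀ C, IsVertexCover E C → 2 ≤ ∑ c ∈ C, a c) {b : V →₀ ℕ} (hb : ∑ v, (a - b) v ≤ 1) :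
    ∃ e ∈ E, sqfreeExp e ≤ b := by
  by_contra! h
  have hC : IsVertexCover E {v | b v = 0} := fun e he => by
    by_contra hemp
    refine h e he fun u => ?_
    rw [sqfreeExp_apply]
    split_ifs with hue
    · by_contra hbu
      exact hemp ⟨u, by simp [hue]; omega⟩
    · exact Nat.zero_le _
  have := hw _ hC
  have : ∑ c ∈ {v | b v = 0}, a c ≤ ∑ v, (a - b) v :=
    calc ∑ c ∈ {v | b v = 0}, a c = ∑ c ∈ {v | b v = 0}, (a - b) c :=
          sum_congr rfl fun c hc => by simp_all
      _ ≤ ∑ v, (a - b) v := sum_le_sum_of_subset (subset_univ _)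
  omega

lemma exists_sqfreeExp_le_of_lt_two (hw : ∀ C, IsVertexCover E C → 2 ≤ ∑ c ∈ C, a c) {u : V}
    (hu : a u < 2) : ∃ g ∈ E, sqfreeExp g ≤ a ∧ u ∉ g := by
  have hle : a - (a - Finsupp.single u 1) ≤ Finsupp.single u 1 := tsub_tsub_le
  have hsum : ∑ v, (a - (a - Finsupp.single u 1) : V →₀ ℕ) v ≤ 1 :=
    calc ∑ v, (a - (a - Finsupp.single u 1) : V →₀ ℕ) v ≤ ∑ v, Finsupp.single u 1 v :=
          sum_le_sum fun v _ => hle v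
      _ = 1 := by simp
  obtain ⟨g, hg, hga⟩ := exists_sqfreeExp_le_of_sum_tsub_le_one hw hsum
  refine ⟨g, hg, hga.trans tsub_le_self, fun hug => ?_⟩
  have := hga u
  simp [sqfreeExp_apply, hug] at this
  omega

theorem exists_three_edges_of_two_le_sum_vertexCover (huniform : ∀ e ∈ E, #e = 3)
    (hw : ∀ C, IsVertexCover E C → 2 ≤ ∑ c ∈ C, a c)
    (hsq : ∀ e ∈ E, ∀ f ∈ E, ¬ sqfreeExp e + sqfreeExp f ≤ a) :
    ∃ e₁ e₂ e₃ : Finset V, e₁ ∈ E ∧ e₂ ∈ E ∧ e₃ ∈ E ∧ e₁ ≠ e₂ ∧ e₂ ≠ e₃ ∧ e₁ ≠ e₃ ∧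
      sqfreeExp e₁ ≤ a ∧ sqfreeExp e₂ ≤ a ∧ sqfreeExp e₃ ≤ a ∧
      (e₁ ∩ e₂).Nonempty ∧ (e₂ ∩ e₃).Nonempty ∧ (e₁ ∩ e₃).Nonempty ∧ #(e₁ ∩ e₂ ∩ e₃) ≤ 1 := by
  obtain ⟨e, he, hea⟩ := exists_sqfreeExp_le_of_sum_tsub_le_one hw (b := a) (by simp)
  by_cases hunique : ∀ f ∈ E, sqfreeExp f ≤ a → f = e
  · refine absurd (sqfreeExp_add_le hea hea fun u hu => ?_) (hsq e he e he)
    by_contra! hu2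
    obtain ⟨g, hg, hga, hug⟩ := exists_sqfreeExp_le_of_lt_two hw hu2
    exact hug (hunique g hg hga ▸ (mem_inter.mp hu).1)
  push Not at hunique
  obtain ⟨f, hf, hfa, hfe⟩ := hunique
  by_cases hdouble : ∀ u ∈ e ∩ f, 2 ≤ a u
  · exact absurd (sqfreeExp_add_le hea hfa hdouble) (hsq e he f hf)
  push Not at hdouble
  obtain ⟨u, hu, hu2⟩ := hdouble
  obtain ⟨g, hg, hga, hug⟩ := exists_sqfreeExp_le_of_lt_two hw hu2
  have hmeet {x y : Finset V} (hx : x ∈ E) (hxa : sqfreeExp x ≤ a) (hy : y ∈ E)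
      (hya : sqfreeExp y ≤ a) : (x ∩ y).Nonempty :=
    inter_nonempty_of_not_sqfreeExp_add_le hxa hya (hsq x hx y hy)
  have hcard := card_inter_inter_add_two_le ((huniform e he).trans (huniform f hf).symm)
    hfe.symm hu hug
  rw [huniform e he] at hcard
  refine ⟨e, f, g, he, hf, hg, hfe.symm, ?_, ?_, hea, hfa, hga, hmeet he hea hf hfa,
    hmeet hf hfa hg hga, hmeet he hea hg hga, by omega⟩
  · rintro rfl
    exact hug (mem_inter.mp hu).2
  · rintro rfl
    exact hug (mem_inter.mp hu).1

end Combinatorics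

theorem stmt16_general {k V : Type*} [Field k] [Fintype V] [DecidableEq V]
    (E : Finset (Finset V))
    (huniform : ∀ e ∈ E, e.card = 3)
    (a : V →₀ ℕ)
    (hmem : (monomial a (1 : k)) ∈ symbolicPower (edgeIdeal k E) 2)
    (hnot : (monomial a (1 : k)) ∉ (edgeIdeal k E) ^ 2) :
    ∃ e₁ e₂ e₃ : Finset V, e₁ ∈ E ∧ e₂ ∈ E ∧ e₃ ∈ E ∧
      e₁ ≠ e₂ ∧ e₂ ≠ e₃ ∧ e₁ ≠ e₃ ∧
      (∏ x ∈ e₁, (X x : MvPolynomial V k)) ∣ monomial a 1 ∧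
      (∏ x ∈ e₂, (X x : MvPolynomial V k)) ∣ monomial a 1 ∧
      (∏ x ∈ e₃, (X x : MvPolynomial V k)) ∣ monomial a 1 ∧
      (e₁ ∩ e₂).Nonempty ∧ (e₂ ∩ e₃).Nonempty ∧ (e₁ ∩ e₃).Nonempty ∧
      (e₁ ∩ e₂ ∩ e₃).card ≤ 1 := by
  have hsq : ∀ e ∈ E, ∀ f ∈ E, ¬ sqfreeExp e + sqfreeExp f ≤ a := fun e he f hf hle =>
    hnot (mem_edgeIdeal_sq_iff.mpr fun b hb => by
      obtain rfl : a = b := by simpa using hb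
      exact ⟨e, he, f, hf, hle⟩)
  obtain ⟨e₁, e₂, e₃, h₁, h₂, h₃, h₁₂, h₂₃, h₁₃, ha₁, ha₂, ha₃, hmeet⟩ :=
    exists_three_edges_of_two_le_sum_vertexCover huniform
      (fun _ hC => two_le_sum_of_monomial_mem_symbolicPower_two hmem hC) hsq
  exact ⟨e₁, e₂, e₃, h₁, h₂, h₃, h₁₂, h₂₃, h₁₃, prod_X_dvd_monomial_of_sqfreeExp_le ha₁,
    prod_X_dvd_monomial_of_sqfreeExp_le ha₂, prod_X_dvd_monomial_of_sqfreeExp_le ha₃, hmeet⟩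

/-- if a monomial lies in the second symbolic but not the second
ordinary power of the edge ideal of a 3-uniform 3-partite hypergraph, then there
are three distinct pairwise intersecting hyperedges, each dividing the monomial,
having at most one common vertex. -/
theorem stmt16 {k V : Type*} [Field k] [Fintype V] [DecidableEq V]
    (E : Finset (Finset V))
    (huniform : ∀ e ∈ E, e.card = 3)
    (Xp : Fin 3 → Finset V)
    (hdisj : Pairwise fun i j => Disjoint (Xp i) (Xp j))
    (hcover : ∀ v : V, ∃ i, v ∈ Xp i)
    (hpartite : ∀ e ∈ E, ∀ i, (e ∩ Xp i).card = 1)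
    (a : V →₀ ℕ)
    (hmem : (monomial a (1 : k)) ∈ symbolicPower (edgeIdeal k E) 2)
    (hnot : (monomial a (1 : k)) ∉ (edgeIdeal k E) ^ 2) :
    ∃ e₁ e₂ e₃ : Finset V, e₁ ∈ E ∧ e₂ ∈ E ∧ e₃ ∈ E ∧
      e₁ ≠ e₂ ∧ e₂ ≠ e₃ ∧ e₁ ≠ e₃ ∧
      (∏ x ∈ e₁, (X x : MvPolynomial V k)) ∣ monomial a 1 ∧
      (∏ x ∈ e₂, (X x : MvPolynomial V k)) ∣ monomial a 1 ∧
      (∏ x ∈ e₃, (X x : MvPolynomial V k)) ∣ monomial a 1 ∧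
      (e₁ ∩ e₂).Nonempty ∧ (e₂ ∩ e₃).Nonempty ∧ (e₁ ∩ e₃).Nonempty ∧
      (e₁ ∩ e₂ ∩ e₃).card ≤ 1 :=
  stmt16_general E huniform a hmem hnot
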